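/- arXiv:1410.4072 — 2 statements merged into one kernel-verified Lean document; each statement's English description precedes it below -/
import Mathlib

section
/- For every δ ∈ (0, 1) and every β > 0 one has the lower bound β·C(β) ≥ −β·log(1 − δ)·exp(−(δ/(1 − δ))·b(aβδ)). -/
open MeasureTheory Real Filter Set

/-- `C(β) = ∫₀¹ (1-x)⁻¹ exp(-∫₀ˣ b(aβy)/(1-y) dy) dx`. -/
noncomputable def Cfun (a : ℝ) (b : ℝ → ℝ) (β : ℝ) : ℝ :=
  ∫ x in (0:ℝ)..1, (1 - x)⁻¹ * Real.exp (-∫ y in (0:ℝ)..x, b (a * β * y) / (1 - y))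

/-!
On `[0, δ]` the hazard `b(aβy)/(1-y)` is at most `b(aβδ)/(1-δ)`, so the inner integral is at most
`(δ/(1-δ)) b(aβδ)` and the integrand of `C(β)` is at least `(1-x)⁻¹ exp(-(δ/(1-δ)) b(aβδ))`, whose
integral over `[0, δ]` is `-log(1-δ) exp(-(δ/(1-δ)) b(aβδ))`. The rest of `[0, 1]` contributes a
nonnegative amount, once we know the integrand is integrable up to `1`: for `x ≥ δ` the hazard is at
least `c/(1-y)` with `c = b(aβδ) > 0`, so the integrand is `O((1-x)^(c-1))`.
-/

noncomputable def cumHazard (k : ℝ → ℝ) (x : ℝ) : ℝ :=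
  ∫ y in (0:ℝ)..x, k y / (1 - y)

lemma uIcc_subset_Iio_one {u v : ℝ} (hu : u < 1) (hv : v < 1) : uIcc u v ⊆ Iio 1 :=
  fun _ hx => hx.2.trans_lt (max_lt hu hv)

lemma continuousOn_inv_one_sub : ContinuousOn (fun x : ℝ => (1 - x)⁻¹) (Iio 1) :=
  (continuousOn_const.sub continuousOn_id).inv₀ fun _ hx => (sub_pos.2 hx).ne'

lemma integral_inv_one_sub {u v : ℝ} (hu : u < 1) (hv : v < 1) :
    ∫ x in u..v, (1 - x)⁻¹ = log ((1 - u) / (1 - v)) := by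
  rw [intervalIntegral.integral_comp_sub_left (fun x => x⁻¹),
    integral_inv_of_pos (sub_pos.2 hv) (sub_pos.2 hu)]

section Hazard

variable {k : ℝ → ℝ}

lemma continuousOn_div_one_sub (hk : Continuous k) :
    ContinuousOn (fun y => k y / (1 - y)) (Iio 1) :=
  hk.continuousOn.div (continuousOn_const.sub continuousOn_id) fun _ hy => (sub_pos.2 hy).ne'

lemma intervalIntegrable_div_one_sub (hk : Continuous k) {u v : ℝ} (hu : u < 1) (hv : v < 1) :
    IntervalIntegrable (fun y => k y / (1 - y)) volume u v :=
  ((continuousOn_div_one_sub hk).mono (uIcc_subset_Iio_one hu hv)).intervalIntegrable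

lemma continuousOn_cumHazard (hk : Continuous k) : ContinuousOn (cumHazard k) (Iio 1) := by
  intro x hx
  refine (intervalIntegral.integral_hasDerivAt_right
    (intervalIntegrable_div_one_sub hk one_pos hx)
    ((continuousOn_div_one_sub hk).stronglyMeasurableAtFilter isOpen_Iio x hx)
    ((continuousOn_div_one_sub hk).continuousAt (isOpen_Iio.mem_nhds hx))).continuousAt
    |>.continuousWithinAt

lemma cumHazard_nonneg (hk_nonneg : ∀ y, 0 ≤ y → 0 ≤ k y)
    {x : ℝ} (hx0 : 0 ≤ x) (hx1 : x < 1) : 0 ≤ cumHazard k x :=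
  intervalIntegral.integral_nonneg hx0 fun y hy =>
    div_nonneg (hk_nonneg y hy.1) (sub_nonneg.2 (hy.2.trans hx1.le))

lemma cumHazard_le (hk : Continuous k) (hk_mono : MonotoneOn k (Ici 0))
    (hk_nonneg : ∀ y, 0 ≤ y → 0 ≤ k y) {δ x : ℝ} (hδ1 : δ < 1) (hx : x ∈ Icc 0 δ) :
    cumHazard k x ≤ δ / (1 - δ) * k δ := by
  have hδ0 : 0 ≤ δ := hx.1.trans hx.2
  have hkδ : 0 ≤ k δ / (1 - δ) := div_nonneg (hk_nonneg δ hδ0) (sub_nonneg.2 hδ1.le)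
  calc cumHazard k x ≤ ∫ _ in (0:ℝ)..x, k δ / (1 - δ) := by
        refine intervalIntegral.integral_mono_on hx.1
          (intervalIntegrable_div_one_sub hk one_pos (hx.2.trans_lt hδ1))
          intervalIntegrable_const fun y hy => ?_
        have hyδ : y ≤ δ := hy.2.trans hx.2
        exact div_le_div₀ (hk_nonneg δ hδ0) (hk_mono hy.1 hδ0 hyδ) (by linarith) (by linarith)
    _ = x * (k δ / (1 - δ)) := by simp [mul_div_assoc]
    _ ≤ δ * (k δ / (1 - δ)) := mul_le_mul_of_nonneg_right hx.2 hkδ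
    _ = δ / (1 - δ) * k δ := by ring

lemma mul_log_le_cumHazard (hk : Continuous k) (hk_mono : MonotoneOn k (Ici 0))
    (hk_nonneg : ∀ y, 0 ≤ y → 0 ≤ k y) {δ x : ℝ} (hδ0 : 0 ≤ δ) (hδx : δ ≤ x) (hx1 : x < 1) :
    k δ * log ((1 - δ) / (1 - x)) ≤ cumHazard k x := by
  have hδ1 : δ < 1 := hδx.trans_lt hx1
  have hsplit : cumHazard k x = cumHazard k δ + ∫ y in δ..x, k y / (1 - y) :=
    (intervalIntegral.integral_add_adjacent_intervals
      (intervalIntegrable_div_one_sub hk one_pos hδ1) (intervalIntegrable_div_one_sub hk hδ1 hx1)).symm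
  have htail : ∫ y in δ..x, k δ * (1 - y)⁻¹ ≤ ∫ y in δ..x, k y / (1 - y) := by
    refine intervalIntegral.integral_mono_on hδx
      ((continuousOn_inv_one_sub.mono (uIcc_subset_Iio_one hδ1 hx1)).intervalIntegrable.const_mul _)
      (intervalIntegrable_div_one_sub hk hδ1 hx1) fun y hy => ?_
    rw [div_eq_mul_inv]
    exact mul_le_mul_of_nonneg_right (hk_mono hδ0 (hδ0.trans hy.1) hy.1)
      (inv_nonneg.2 (by linarith [hy.2]))
  rw [intervalIntegral.integral_const_mul, integral_inv_one_sub hδ1 hx1] at htail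
  linarith [cumHazard_nonneg hk_nonneg hδ0 hδ1]

lemma inv_one_sub_mul_exp_le_rpow (hk : Continuous k) (hk_mono : MonotoneOn k (Ici 0))
    (hk_nonneg : ∀ y, 0 ≤ y → 0 ≤ k y) {δ x : ℝ} (hδ0 : 0 ≤ δ) (hx : x ∈ Ioo δ 1) :
    (1 - x)⁻¹ * exp (-cumHazard k x) ≤ ((1 - δ) ^ k δ)⁻¹ * (1 - x) ^ (k δ - 1) := by
  have hx1 : 0 < 1 - x := sub_pos.2 hx.2
  have hδ1 : 0 < 1 - δ := by linarith [hx.1, hx.2]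
  have hexp : exp (-cumHazard k x) ≤ ((1 - x) / (1 - δ)) ^ k δ := by
    rw [rpow_def_of_pos (div_pos hx1 hδ1), ← inv_div, log_inv, exp_le_exp]
    linarith [mul_log_le_cumHazard hk hk_mono hk_nonneg hδ0 hx.1.le hx.2]
  calc (1 - x)⁻¹ * exp (-cumHazard k x) ≤ (1 - x)⁻¹ * ((1 - x) / (1 - δ)) ^ k δ :=
        mul_le_mul_of_nonneg_left hexp (inv_nonneg.2 hx1.le)
    _ = ((1 - δ) ^ k δ)⁻¹ * (1 - x) ^ (k δ - 1) := by
        rw [div_rpow hx1.le hδ1.le, rpow_sub hx1, rpow_one]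
        field_simp

lemma intervalIntegrable_inv_one_sub_mul_exp (hk : Continuous k) (hk_mono : MonotoneOn k (Ici 0))
    (hk_nonneg : ∀ y, 0 ≤ y → 0 ≤ k y) {δ : ℝ} (hδ : δ ∈ Ioo 0 1) (hkδ : 0 < k δ) :
    IntervalIntegrable (fun x => (1 - x)⁻¹ * exp (-cumHazard k x)) volume 0 1 := by
  obtain ⟨hδ0, hδ1⟩ := hδ
  have hcont : ContinuousOn (fun x => (1 - x)⁻¹ * exp (-cumHazard k x)) (Iio 1) :=
    continuousOn_inv_one_sub.mul (continuousOn_cumHazard hk).neg.rexp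
  have hhead : IntervalIntegrable (fun x => (1 - x)⁻¹ * exp (-cumHazard k x)) volume 0 δ :=
    (hcont.mono (uIcc_subset_Iio_one one_pos hδ1)).intervalIntegrable
  have hdom : IntegrableOn (fun x => ((1 - δ) ^ k δ)⁻¹ * (1 - x) ^ (k δ - 1)) (Ioo δ 1) := by
    have h := ((intervalIntegral.intervalIntegrable_rpow' (a := 0) (b := 1 - δ)
      (r := k δ - 1) (by linarith)).comp_sub_left 1).const_mul ((1 - δ) ^ k δ)⁻¹
    rw [sub_sub_cancel, sub_zero] at h
    exact (intervalIntegrable_iff_integrableOn_Ioo_of_le hδ1.le).1 h.symm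
  have htail : IntegrableOn (fun x => (1 - x)⁻¹ * exp (-cumHazard k x)) (Ioo δ 1) := by
    refine hdom.mono' ((hcont.mono fun _ hx => hx.2).aestronglyMeasurable measurableSet_Ioo) ?_
    filter_upwards [ae_restrict_mem measurableSet_Ioo] with x hx
    rw [Real.norm_of_nonneg (mul_nonneg (inv_nonneg.2 (by linarith [hx.2])) (exp_pos _).le)]
    exact inv_one_sub_mul_exp_le_rpow hk hk_mono hk_nonneg hδ0.le hx
  exact hhead.trans ((intervalIntegrable_iff_integrableOn_Ioo_of_le hδ1.le).2 htail)

theorem neg_log_mul_exp_le_integral (hk : Continuous k) (hk_mono : MonotoneOn k (Ici 0))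
    (hk_nonneg : ∀ y, 0 ≤ y → 0 ≤ k y) {δ : ℝ} (hδ : δ ∈ Ioo 0 1) (hkδ : 0 < k δ) :
    -log (1 - δ) * exp (-(δ / (1 - δ)) * k δ)
      ≤ ∫ x in (0:ℝ)..1, (1 - x)⁻¹ * exp (-cumHazard k x) := by
  obtain ⟨hδ0, hδ1⟩ := hδ
  set K := exp (-(δ / (1 - δ)) * k δ)
  have hint := intervalIntegrable_inv_one_sub_mul_exp hk hk_mono hk_nonneg ⟨hδ0, hδ1⟩ hkδ
  calc -log (1 - δ) * K = ∫ x in (0:ℝ)..δ, (1 - x)⁻¹ * K := by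
        rw [intervalIntegral.integral_mul_const, integral_inv_one_sub one_pos hδ1]
        simp
    _ ≤ ∫ x in (0:ℝ)..δ, (1 - x)⁻¹ * exp (-cumHazard k x) := by
        refine intervalIntegral.integral_mono_on hδ0.le
          ((continuousOn_inv_one_sub.mono (uIcc_subset_Iio_one one_pos hδ1)).intervalIntegrable.mul_const _)
          (hint.mono_set (uIcc_subset_uIcc_left (by simp [hδ0.le, hδ1.le]))) fun x hx => ?_
        refine mul_le_mul_of_nonneg_left (exp_le_exp.2 ?_) (inv_nonneg.2 (by linarith [hx.2]))
        linarith [cumHazard_le hk hk_mono hk_nonneg hδ1 hx]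
    _ ≤ ∫ x in (0:ℝ)..1, (1 - x)⁻¹ * exp (-cumHazard k x) := by
        refine intervalIntegral.integral_mono_interval le_rfl hδ0.le hδ1.le ?_ hint
        filter_upwards [ae_restrict_mem measurableSet_Ioc] with x hx
        exact mul_nonneg (inv_nonneg.2 (by linarith [hx.2])) (exp_pos _).le

end Hazard

/-- for every `δ ∈ (0,1)` and `β > 0`,
`β C(β) ≥ -β log(1-δ) exp(-(δ/(1-δ)) b(aβδ))`. -/
theorem betaC_lower_bound
    (a : ℝ) (ha : 0 < a) (b : ℝ → ℝ)
    (hb_cont : Continuous b) (hb_mono : MonotoneOn b (Set.Ici 0))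
    (hb0 : 0 ≤ b 0) (hb_pos : ∀ x > (0:ℝ), 0 < b x)
    (δ β : ℝ) (hδ : δ ∈ Set.Ioo (0:ℝ) 1) (hβ : 0 < β) :
    -β * Real.log (1 - δ) * Real.exp (-(δ / (1 - δ)) * b (a * β * δ))
      ≤ β * Cfun a b β := by
  have haβ : 0 < a * β := mul_pos ha hβ
  have hk_mono : MonotoneOn (fun y => b (a * β * y)) (Ici 0) := fun x hx y hy hxy =>
    hb_mono (mul_nonneg haβ.le hx) (mul_nonneg haβ.le hy) (by gcongr)
  have hk_nonneg : ∀ y, 0 ≤ y → 0 ≤ b (a * β * y) := fun y hy =>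
    hb0.trans (hb_mono self_mem_Ici (mul_nonneg haβ.le hy) (mul_nonneg haβ.le hy))
  have hC := neg_log_mul_exp_le_integral (hb_cont.comp (continuous_const_mul (a * β))) hk_mono
    hk_nonneg hδ (hb_pos _ (mul_pos haβ hδ.1))
  calc -β * Real.log (1 - δ) * Real.exp (-(δ / (1 - δ)) * b (a * β * δ))
      = β * (-Real.log (1 - δ) * Real.exp (-(δ / (1 - δ)) * b (a * β * δ))) := by ring
    _ ≤ β * Cfun a b β := mul_le_mul_of_nonneg_left hC hβ.le
end

section
/- If b(x)/x → 0 as x → 0⁺, then β·C(β) → +∞ as β → 0⁺. -/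
/-!
Since `b` is nondecreasing, `b (aβy) ≤ b (aβ)` for `y ∈ [0, 1)`, so the inner integral is at most
`-b (aβ) log (1 - x)` and the integrand of `C(β)` dominates `(1 - x) ^ (b (aβ) - 1)`, whose
integral is `1 / b (aβ)`. Hence `β C(β) ≥ a⁻¹ · aβ / b (aβ)`, which tends to `∞`. The comparison
needs the integrand to be integrable; near `1` it is bounded by a multiple of
`(1 - x) ^ (b (aβ/2) - 1)`, by the reverse estimate with `b (aβ/2) ≤ b (aβy)` on `[1/2, 1)`.
-/

open MeasureTheory Real Filter Set

open intervalIntegral Topology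

theorem integral_inv_one_sub_s3 {s x : ℝ} (hs : s < 1) (hx : x < 1) :
    ∫ y in s..x, (1 - y)⁻¹ = log (1 - s) - log (1 - x) := by
  rw [integral_comp_sub_left (fun u => u⁻¹) 1, integral_inv, log_div (by linarith) (by linarith)]
  rw [mem_uIcc]
  rintro (h | h) <;> linarith [h.1, h.2]

section

variable {f g : ℝ → ℝ} {s x : ℝ}

theorem intervalIntegrable_div_one_sub_s3 (hf : Continuous f) (hs : s < 1) (hx : x < 1) :
    IntervalIntegrable (fun y => f y / (1 - y)) volume s x := by
  refine (hf.continuousOn.div (by fun_prop) fun y hy => ?_).intervalIntegrable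
  rw [mem_uIcc] at hy
  rcases hy with h | h <;> linarith [h.2]

theorem integral_const_div_one_sub (c : ℝ) (hs : s < 1) (hx : x < 1) :
    ∫ y in s..x, c / (1 - y) = c * (log (1 - s) - log (1 - x)) := by
  simp_rw [div_eq_mul_inv, intervalIntegral.integral_const_mul, integral_inv_one_sub_s3 hs hx]

theorem integral_div_one_sub_mono (hf : Continuous f) (hg : Continuous g) (hsx : s ≤ x)
    (hx : x < 1) (hfg : ∀ y ∈ Ico s 1, f y ≤ g y) :
    ∫ y in s..x, f y / (1 - y) ≤ ∫ y in s..x, g y / (1 - y) := by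
  refine integral_mono_on hsx (intervalIntegrable_div_one_sub_s3 hf (hsx.trans_lt hx) hx)
    (intervalIntegrable_div_one_sub_s3 hg (hsx.trans_lt hx) hx) fun y hy => ?_
  exact div_le_div_of_nonneg_right (hfg y ⟨hy.1, hy.2.trans_lt hx⟩) (by linarith [hy.2])

/-- `Cfun a b β` is, by definition, `∫ x in 0..1, Cintegrand (fun y ↦ b (a * β * y)) x`. -/
noncomputable def Cintegrand (f : ℝ → ℝ) (x : ℝ) : ℝ :=
  (1 - x)⁻¹ * exp (-∫ y in (0:ℝ)..x, f y / (1 - y))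

theorem one_sub_rpow_sub_one_le_Cintegrand (hf : Continuous f) {c : ℝ}
    (hfc : ∀ y ∈ Ico 0 1, f y ≤ c) (hx0 : 0 ≤ x) (hx1 : x < 1) :
    (1 - x) ^ (c - 1) ≤ Cintegrand f x := by
  have hx : 0 < 1 - x := by linarith
  have hI : ∫ y in (0:ℝ)..x, f y / (1 - y) ≤ c * (-log (1 - x)) := by
    simpa using (integral_div_one_sub_mono hf continuous_const hx0 hx1 hfc).trans_eq
      (integral_const_div_one_sub c zero_lt_one hx1)
  rw [rpow_sub_one hx.ne', div_eq_inv_mul, Cintegrand, rpow_def_of_pos hx]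
  gcongr
  linarith

theorem Cintegrand_le (hf : Continuous f) {c : ℝ} (hs : s < 1) (hfc : ∀ y ∈ Ico s 1, c ≤ f y)
    (hsx : s ≤ x) (hx : x < 1) :
    Cintegrand f x ≤
      exp (-∫ y in (0:ℝ)..s, f y / (1 - y)) * (1 - s) ^ (-c) * (1 - x) ^ (c - 1) := by
  have hx' : 0 < 1 - x := by linarith
  have hsplit := integral_add_adjacent_intervals (intervalIntegrable_div_one_sub_s3 hf zero_lt_one hs)
    (intervalIntegrable_div_one_sub_s3 hf hs hx)
  have hI := (integral_const_div_one_sub c hs hx).symm.trans_le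
    (integral_div_one_sub_mono continuous_const hf hsx hx hfc)
  rw [Cintegrand, rpow_sub_one hx'.ne', rpow_def_of_pos (by linarith), rpow_def_of_pos hx',
    ← hsplit, mul_div_assoc', div_eq_inv_mul, ← exp_add, ← exp_add]
  gcongr
  linarith

theorem intervalIntegrable_one_sub_rpow {c : ℝ} (hc : 0 < c) (s : ℝ) :
    IntervalIntegrable (fun x => (1 - x) ^ (c - 1)) volume s 1 := by
  simpa using
    (intervalIntegrable_rpow' (a := 1 - s) (b := 0) (r := c - 1) (by linarith)).comp_sub_left 1

theorem integral_one_sub_rpow {c : ℝ} (hc : 0 < c) :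
    ∫ x in (0:ℝ)..1, (1 - x) ^ (c - 1) = c⁻¹ := by
  rw [integral_comp_sub_left (fun u => u ^ (c - 1)) 1]
  simp [integral_rpow (Or.inl (by linarith : (-1:ℝ) < c - 1)), hc.ne']

theorem continuousOn_Cintegrand (hf : Continuous f) : ContinuousOn (Cintegrand f) (Iio 1) := by
  have hg : ContinuousOn (fun y => f y / (1 - y)) (Iio 1) :=
    hf.continuousOn.div (by fun_prop) fun y hy => by linarith [mem_Iio.1 hy]
  intro x hx
  have hprim := integral_hasDerivAt_right (intervalIntegrable_div_one_sub_s3 hf zero_lt_one hx)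
    (hg.stronglyMeasurableAtFilter isOpen_Iio x hx) (hg.continuousAt (isOpen_Iio.mem_nhds hx))
  refine ContinuousAt.continuousWithinAt ?_
  exact ((continuousAt_const.sub continuousAt_id).inv₀ (sub_ne_zero.2 (ne_of_gt hx))).mul
    (continuous_exp.continuousAt.comp hprim.continuousAt.neg)

theorem Cintegrand_nonneg (hx : x < 1) : 0 ≤ Cintegrand f x :=
  mul_nonneg (inv_nonneg.2 (by linarith)) (exp_nonneg _)

theorem intervalIntegrable_Cintegrand (hf : Continuous f) {c : ℝ} (hc : 0 < c) (hs : s < 1)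
    (hfc : ∀ y ∈ Ico s 1, c ≤ f y) : IntervalIntegrable (Cintegrand f) volume 0 1 := by
  have hcont := continuousOn_Cintegrand hf
  refine IntervalIntegrable.trans (b := s) ((hcont.mono fun y hy => ?_).intervalIntegrable) ?_
  · rw [mem_uIcc] at hy
    rcases hy with h | h <;> exact mem_Iio.2 (by linarith [h.2])
  rw [intervalIntegrable_iff_integrableOn_Ioo_of_le hs.le]
  refine Integrable.mono' ((intervalIntegrable_iff_integrableOn_Ioo_of_le hs.le).1
    ((intervalIntegrable_one_sub_rpow hc s).const_mul
      (exp (-∫ y in (0:ℝ)..s, f y / (1 - y)) * (1 - s) ^ (-c))))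
    ((hcont.mono fun y hy => mem_Iio.2 hy.2).aestronglyMeasurable measurableSet_Ioo) ?_
  filter_upwards [ae_restrict_mem measurableSet_Ioo] with x hx
  rw [Real.norm_of_nonneg (Cintegrand_nonneg hx.2)]
  exact Cintegrand_le hf hs hfc hx.1.le hx.2

theorem inv_le_integral_Cintegrand (hf : Continuous f) {c c₀ : ℝ} (hc : 0 < c)
    (hfc : ∀ y ∈ Ico 0 1, f y ≤ c) (hs : s < 1) (hc₀ : 0 < c₀) (hfc₀ : ∀ y ∈ Ico s 1, c₀ ≤ f y) :
    c⁻¹ ≤ ∫ x in (0:ℝ)..1, Cintegrand f x := by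
  rw [← integral_one_sub_rpow hc]
  exact integral_mono_on_of_le_Ioo zero_le_one (intervalIntegrable_one_sub_rpow hc 0)
    (intervalIntegrable_Cintegrand hf hc₀ hs hfc₀)
    fun x hx => one_sub_rpow_sub_one_le_Cintegrand hf hfc hx.1.le hx.2

end

theorem inv_le_Cfun {a : ℝ} (ha : 0 < a) {b : ℝ → ℝ} (hb_cont : Continuous b)
    (hb_mono : MonotoneOn b (Ici 0)) (hb_pos : ∀ x > (0:ℝ), 0 < b x) {β : ℝ} (hβ : 0 < β) :
    (b (a * β))⁻¹ ≤ Cfun a b β := by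
  have haβ : 0 < a * β := mul_pos ha hβ
  have hmono : ∀ {y z : ℝ}, 0 ≤ y → y ≤ z → b (a * β * y) ≤ b (a * β * z) := fun hy hyz =>
    hb_mono (mem_Ici.2 (by positivity)) (mem_Ici.2 (by nlinarith)) (by nlinarith)
  refine inv_le_integral_Cintegrand (by fun_prop) (hb_pos _ haβ) (c₀ := b (a * β * (1 / 2)))
    (fun y hy => by simpa using hmono hy.1 hy.2.le) one_half_lt_one (hb_pos _ (by positivity))
    fun y hy => hmono (by norm_num) hy.1

theorem tendsto_div_apply_atTop_of_slope_zero {b : ℝ → ℝ} (hb_pos : ∀ x > (0:ℝ), 0 < b x)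
    (hslope : Tendsto (fun x => b x / x) (𝓝[>] 0) (𝓝 0)) :
    Tendsto (fun x => x / b x) (𝓝[>] 0) atTop := by
  have h : Tendsto (fun x => b x / x) (𝓝[>] 0) (𝓝[>] 0) :=
    tendsto_nhdsWithin_of_tendsto_nhds_of_eventually_within _ hslope
      (eventually_nhdsWithin_of_forall fun x hx => div_pos (hb_pos x hx) hx)
  exact h.inv_tendsto_nhdsGT_zero.congr fun x => inv_div _ _

theorem betaC_tendsto_atTop_of_slope_zero_general
    (a : ℝ) (ha : 0 < a) (b : ℝ → ℝ)
    (hb_cont : Continuous b) (hb_mono : MonotoneOn b (Set.Ici 0))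
    (hb_pos : ∀ x > (0:ℝ), 0 < b x)
    (hslope : Tendsto (fun x => b x / x) (nhdsWithin 0 (Set.Ioi 0)) (nhds 0)) :
    Tendsto (fun β => β * Cfun a b β) (nhdsWithin 0 (Set.Ioi 0)) atTop := by
  have hscale : Tendsto (a * ·) (𝓝[>] 0) (𝓝[>] (0:ℝ)) :=
    tendsto_iff_comap.2 (comap_mulLeft_nhdsGT_zero ha).ge
  have hlim : Tendsto (fun β => a⁻¹ * (a * β / b (a * β))) (𝓝[>] 0) atTop :=
    ((tendsto_div_apply_atTop_of_slope_zero hb_pos hslope).comp hscale).const_mul_atTop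
      (inv_pos.2 ha)
  refine tendsto_atTop_mono' _ ?_ hlim
  filter_upwards [self_mem_nhdsWithin] with β (hβ : 0 < β)
  calc a⁻¹ * (a * β / b (a * β)) = β * (b (a * β))⁻¹ := by field_simp
    _ ≤ β * Cfun a b β :=
      mul_le_mul_of_nonneg_left (inv_le_Cfun ha hb_cont hb_mono hb_pos hβ) hβ.le

/-- if `b(x)/x → 0` as `x → 0⁺`, then `β C(β) → ∞` as `β → 0⁺`. -/
theorem betaC_tendsto_atTop_of_slope_zero
    (a : ℝ) (ha : 0 < a) (b : ℝ → ℝ)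
    (hb_cont : Continuous b) (hb_mono : MonotoneOn b (Set.Ici 0))
    (hb0 : 0 ≤ b 0) (hb_pos : ∀ x > (0:ℝ), 0 < b x)
    (hslope : Tendsto (fun x => b x / x) (nhdsWithin 0 (Set.Ioi 0)) (nhds 0)) :
    Tendsto (fun β => β * Cfun a b β) (nhdsWithin 0 (Set.Ioi 0)) atTop :=
  betaC_tendsto_atTop_of_slope_zero_general a ha b hb_cont hb_mono hb_pos hslope
end
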